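/- arXiv:2212.14096 — 2 statements merged into one kernel-verified Lean document; each statement's English description precedes it below -/
import Mathlib

section
/- In L, for every regular uncountable cardinal κ there is a κ-complete filter on κ extending the club filter which fails the Galvin property Gal(·, κ, κ⁺). -/
open Cardinal Set

/-- `C` is a club (closed unbounded set) in the regular cardinal `κ`, whose points are
realized as the elements of the well-ordered type `κ.ord.ToType`: `C` is unbounded and
contains each of its limit points. -/
def IsClubIn {T : Type} [LinearOrder T] (C : Set T) : Prop :=
  (∀ a : T, ∃ b ∈ C, a < b) ∧
    ∀ a : T, (C ∩ Set.Iio a).Nonempty → IsLUB (C ∩ Set.Iio a) a → a ∈ C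

/-- `S` is stationary: it meets every club. -/
def StatIn {T : Type} [LinearOrder T] (S : Set T) : Prop :=
  ∀ C : Set T, IsClubIn C → (S ∩ C).Nonempty

/-- The diamond principle `◊(κ)`: there is a sequence `⟨A_a : a < κ⟩` with `A_a ⊆ a`
guessing every subset of `κ` on a stationary set. -/
def DiamondOn (κ : Cardinal.{0}) : Prop :=
  ∃ A : κ.ord.ToType → Set κ.ord.ToType,
    (∀ a, A a ⊆ Set.Iio a) ∧
      ∀ X : Set κ.ord.ToType, StatIn {a | X ∩ Set.Iio a = A a}

/-- `A` is a `κ`-independent family: for disjoint index sets `I, J` of size `< κ`, the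
set `⋂_{i ∈ I} A_i ∩ ⋂_{j ∈ J} A_jᶜ` is nonempty. -/
def IndepFam (κ : Cardinal.{0}) {T ι : Type} (A : ι → Set T) : Prop :=
  ∀ I J : Set ι, Disjoint I J → #I < κ → #J < κ →
    ((⋂ i ∈ I, A i) ∩ ⋂ j ∈ J, (A j)ᶜ).Nonempty

/-- `A` is a normal `κ`-independent family: it is `κ`-independent, and for any two
disjoint `κ`-indexed subcollections `⟨A_{a i} : i < κ⟩`, `⟨A_{b i} : i < κ⟩` the
diagonal intersection `Δ_{i<κ} (A_{a i} \ A_{b i}) = {ν : ∀ i < ν, ν ∈ A_{a i} \ A_{b i}}`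
is stationary in `κ`. -/
def NormalIndepFam (κ : Cardinal.{0}) {T ι : Type} [LinearOrder T] (A : ι → Set T) :
    Prop :=
  IndepFam κ A ∧
    ∀ a b : T → ι, (∀ i j, a i ≠ b j) →
      StatIn {ν : T | ∀ i < ν, ν ∈ A (a i) \ A (b i)}

/-- `F` is a (proper) `κ`-complete filter on `κ`. -/
def IsCFilter (κ : Cardinal.{0}) {T : Type} (F : Set (Set T)) : Prop :=
  Set.univ ∈ F ∧ ∅ ∉ F ∧ (∀ X ∈ F, ∀ Y : Set T, X ⊆ Y → Y ∈ F) ∧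
    ∀ (ι : Type) (f : ι → Set T), #ι < κ → (∀ i, f i ∈ F) → (⋂ i, f i) ∈ F

/-- The Galvin property `Gal(F, κ, lam)` for a filter `F` given as a family of sets. -/
def GalF (κ lam : Cardinal.{0}) {T : Type} (F : Set (Set T)) : Prop :=
  ∀ A : lam.ord.ToType → Set T, (∀ i, A i ∈ F) →
    ∃ I : Set lam.ord.ToType, #I = κ ∧ (⋂ i ∈ I, A i) ∈ F


lemma bdd_of_small {κ : Cardinal.{0}} (hreg : κ.IsRegular) (s : Set κ.ord.ToType)
    (hs : #s < κ) : ∃ b : κ.ord.ToType, ∀ x ∈ s, x < b := by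
  set i := Ordinal.ToType.mk (o := κ.ord) with hi
  have hlt : ∀ x : s, (i.symm x.1).1 < κ.ord := fun x => (i.symm x.1).2
  have hb : Ordinal.lsub (fun x : s => (i.symm x.1).1) < κ.ord :=
    Cardinal.lsub_lt_ord_of_isRegular hreg hs hlt
  refine ⟨i ⟨_, hb⟩, fun x hx => ?_⟩
  have h1 : i.symm x < (⟨_, hb⟩ : Set.Iio κ.ord) := by
    rw [← Subtype.coe_lt_coe]
    exact Ordinal.lt_lsub _ (⟨x, hx⟩ : s)
  have := i.lt_iff_lt.mpr h1
  simpa using this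

lemma exists_isLUB {κ : Cardinal.{0}} (s : Set κ.ord.ToType) (hne : s.Nonempty)
    (hbd : BddAbove s) : ∃ b, IsLUB s b := by
  have hwf : (upperBounds s).Nonempty := hbd
  obtain ⟨b, hb, hmin⟩ := (@wellFounded_lt κ.ord.ToType _ _).has_min _ hwf
  exact ⟨b, hb, fun u hu => not_lt.mp (fun h => hmin u hu h)⟩

lemma card_Iic_lt {κ : Cardinal.{0}} (hκ : ℵ₀ < κ) (a : κ.ord.ToType) :
    #(Iic a) < κ := by
  have h1 : (Iic a : Set κ.ord.ToType) = Iio a ∪ {a} := by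
    ext x; simp [le_iff_lt_or_eq]
  rw [h1]
  refine lt_of_le_of_lt (Cardinal.mk_union_le _ _) ?_
  refine Cardinal.add_lt_of_lt hκ.le (Cardinal.mk_Iio_ord_toType a) ?_
  rw [Cardinal.mk_singleton]
  exact lt_trans Cardinal.one_lt_aleph0 hκ

lemma isClubIn_iInter {κ : Cardinal.{0}} (hκ : ℵ₀ < κ) (hreg : κ.IsRegular)
    {ι : Type} (f : ι → Set κ.ord.ToType) (hι : #ι < κ)
    (h : ∀ i, IsClubIn (f i)) : IsClubIn (⋂ i, f i) := by
  have h' : ∀ a : κ.ord.ToType, ∃ b, a < b ∧ ∀ i, ∃ c ∈ f i, a < c ∧ c < b := by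
    intro a
    choose c hc1 hc2 using fun i => (h i).1 a
    have hs : #(insert a (range c) : Set κ.ord.ToType) < κ := by
      refine lt_of_le_of_lt (Cardinal.mk_insert_le) ?_
      exact Cardinal.add_lt_of_lt hκ.le
        (lt_of_le_of_lt Cardinal.mk_range_le hι)
        (lt_trans Cardinal.one_lt_aleph0 hκ)
    obtain ⟨b, hb⟩ := bdd_of_small hreg _ hs
    exact ⟨b, hb a (mem_insert _ _), fun i =>
      ⟨c i, hc1 i, hc2 i, hb _ (mem_insert_of_mem _ (mem_range_self i))⟩⟩
  constructor
  · intro a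
    set u : ℕ → κ.ord.ToType := fun n => Nat.rec a (fun _ x => (h' x).choose) n with hu
    have hustep : ∀ n, u n < u (n + 1) ∧ ∀ i, ∃ c ∈ f i, u n < c ∧ c < u (n + 1) :=
      fun n => (h' (u n)).choose_spec
    have hrs : #(range u) < κ :=
      lt_of_le_of_lt (le_trans Cardinal.mk_range_le (by simp)) hκ
    obtain ⟨b0, hb0⟩ := bdd_of_small hreg _ hrs
    obtain ⟨b, hblub⟩ := exists_isLUB (range u) ⟨a, 0, rfl⟩
      ⟨b0, fun x hx => le_of_lt (hb0 x hx)⟩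
    have hub : ∀ n, u n ≤ b := fun n => hblub.1 (mem_range_self n)
    have hbf : ∀ i, b ∈ f i := by
      intro i
      choose c hc1 hc2 hc3 using fun n => (hustep n).2 i
      have hclt : ∀ n, c n < b := fun n => lt_of_lt_of_le (hc3 n) (hub (n + 1))
      refine (h i).2 b ⟨c 0, hc1 0, hclt 0⟩ ⟨fun x hx => le_of_lt hx.2, ?_⟩
      intro v hv
      refine hblub.2 ?_
      rintro _ ⟨n, rfl⟩
      exact le_of_lt (lt_of_lt_of_le (hc2 n) (hv ⟨hc1 n, hclt n⟩))
    refine ⟨b, mem_iInter.mpr hbf, ?_⟩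
    calc a = u 0 := rfl
    _ < u 1 := (hustep 0).1
    _ ≤ b := hub 1
  · intro a hne hlub
    refine mem_iInter.mpr fun i => ?_
    refine (h i).2 a (hne.mono (fun x hx => ⟨(mem_iInter.mp hx.1) i, hx.2⟩)) ?_
    refine ⟨fun x hx => le_of_lt hx.2, fun v hv => hlub.2 ?_⟩
    exact fun x hx => hv ⟨(mem_iInter.mp hx.1) i, hx.2⟩

lemma isClubIn_univ {κ : Cardinal.{0}} (hκ : ℵ₀ < κ) (hreg : κ.IsRegular) :
    IsClubIn (univ : Set κ.ord.ToType) := by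
  have := isClubIn_iInter hκ hreg (ι := Empty) (fun i => ∅) (by simp; exact hreg.pos)
    (fun i => i.elim)
  rwa [Set.iInter_of_empty] at this

lemma two_lt {κ : Cardinal.{0}} (hκ : ℵ₀ < κ) : (1 : Cardinal) + 1 < κ :=
  lt_of_lt_of_le (by norm_num) hκ.le

lemma isClubIn_Ioi {κ : Cardinal.{0}} (hκ : ℵ₀ < κ) (hreg : κ.IsRegular)
    (δ : κ.ord.ToType) : IsClubIn (Ioi δ) := by
  constructor
  · intro a
    have hs : #(insert δ {a} : Set κ.ord.ToType) < κ :=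
      lt_of_le_of_lt (le_trans Cardinal.mk_insert_le (by rw [Cardinal.mk_singleton]))
        (two_lt hκ)
    obtain ⟨b, hb⟩ := bdd_of_small hreg _ hs
    exact ⟨b, hb δ (mem_insert _ _), hb a (mem_insert_of_mem _ rfl)⟩
  · rintro a ⟨x, hx1, hx2⟩ _
    exact lt_trans hx1 (show x < a from hx2)

lemma isClubIn_closure {κ : Cardinal.{0}} (hκ : ℵ₀ < κ) (hreg : κ.IsRegular)
    (F : κ.ord.ToType → κ.ord.ToType) :
    IsClubIn {a : κ.ord.ToType | ∀ c, c < a → F c < a} := by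
  have hF : ∀ a : κ.ord.ToType, #(F '' Iic a) < κ := fun a =>
    lt_of_le_of_lt Cardinal.mk_image_le (card_Iic_lt hκ a)
  have h' : ∀ a : κ.ord.ToType, ∃ b, a < b ∧ ∀ c ≤ a, F c < b := by
    intro a
    have hs : #(insert a (F '' Iic a) : Set κ.ord.ToType) < κ :=
      lt_of_le_of_lt Cardinal.mk_insert_le
        (Cardinal.add_lt_of_lt hκ.le (hF a) (lt_trans Cardinal.one_lt_aleph0 hκ))
    obtain ⟨b, hb⟩ := bdd_of_small hreg _ hs
    exact ⟨b, hb a (mem_insert _ _), fun c hc =>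
      hb _ (mem_insert_of_mem _ (mem_image_of_mem F hc))⟩
  constructor
  · intro a
    set u : ℕ → κ.ord.ToType := fun n => Nat.rec a (fun _ x => (h' x).choose) n with hu
    have hustep : ∀ n, u n < u (n + 1) ∧ ∀ c ≤ u n, F c < u (n + 1) :=
      fun n => (h' (u n)).choose_spec
    have hrs : #(range u) < κ :=
      lt_of_le_of_lt (le_trans Cardinal.mk_range_le (by simp)) hκ
    obtain ⟨b0, hb0⟩ := bdd_of_small hreg _ hrs
    obtain ⟨b, hblub⟩ := exists_isLUB (range u) ⟨a, 0, rfl⟩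
      ⟨b0, fun x hx => le_of_lt (hb0 x hx)⟩
    have hub : ∀ n, u n ≤ b := fun n => hblub.1 (mem_range_self n)
    refine ⟨b, fun c hc => ?_, ?_⟩
    · by_cases hall : ∀ n, u n ≤ c
      · exact absurd (hblub.2 (by rintro _ ⟨n, rfl⟩; exact hall n)) (not_le.mpr hc)
      · push_neg at hall
        obtain ⟨n, hn⟩ := hall
        exact lt_of_lt_of_le ((hustep n).2 c (le_of_lt hn)) (hub (n + 1))
    · calc a = u 0 := rfl
      _ < u 1 := (hustep 0).1
      _ ≤ b := hub 1
  · intro a hne hlub c hc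
    by_cases hall : ∀ x ∈ {a : κ.ord.ToType | ∀ c, c < a → F c < a} ∩ Iio a, x ≤ c
    · exact absurd (hlub.2 hall) (not_le.mpr hc)
    · push_neg at hall
      obtain ⟨x, hx, hcx⟩ := hall
      exact lt_trans (hx.1 c hcx) hx.2

lemma isClubIn_inter {κ : Cardinal.{0}} (hκ : ℵ₀ < κ) (hreg : κ.IsRegular)
    {C D : Set κ.ord.ToType} (hC : IsClubIn C) (hD : IsClubIn D) :
    IsClubIn (C ∩ D) := by
  have h2 : #Bool < κ := by
    rw [Cardinal.mk_bool]
    refine lt_trans ?_ hκ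
    norm_num
  have := isClubIn_iInter hκ hreg (ι := Bool) (fun b => cond b C D) h2
    (fun b => by cases b <;> assumption)
  have heq : (⋂ b : Bool, cond b C D) = C ∩ D := by
    ext x; simp [Bool.forall_bool, and_comm]
  rwa [heq] at this

/-- The family of sets built from the diamond sequence `D` and pairing `p`. -/
def AxFam {T : Type} [LinearOrder T] (p : T × T ≃ T) (D : T → Set T) (Y : Set T) :
    Set T :=
  {a | ∃ i, Y ∩ Iio a = {b | p (i, b) ∈ D a}}

lemma main_lemma {κ : Cardinal.{0}} (hκ : ℵ₀ < κ) (hreg : κ.IsRegular)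
    (D : κ.ord.ToType → Set κ.ord.ToType)
    (hD : ∀ W : Set κ.ord.ToType, StatIn {a | W ∩ Iio a = D a})
    (p : κ.ord.ToType × κ.ord.ToType ≃ κ.ord.ToType)
    (t0 : κ.ord.ToType)
    {ιT : Type} (X : ιT → Set κ.ord.ToType) (hXinj : Function.Injective X)
    (hXt0 : ∀ β, t0 ∈ X β)
    (J : Set ιT) (hJ : #J < κ) (α : ιT) (hα : α ∉ J)
    (C : Set κ.ord.ToType) (hC : IsClubIn C) :
    ∃ a ∈ C, (∀ j ∈ J, a ∈ AxFam p D (X j)) ∧ a ∉ AxFam p D (X α) := by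
  classical
  have mkT : #κ.ord.ToType = κ := by rw [Cardinal.mk_toType, Cardinal.card_ord]
  -- embedding of J into T
  obtain ⟨e⟩ : Nonempty (↥J ↪ κ.ord.ToType) :=
    (Cardinal.le_def _ _).mp (le_of_lt (lt_of_lt_of_eq hJ mkT.symm))
  -- the coded set W
  set W : Set κ.ord.ToType := ⋃ j : J, (fun x => p (e j, x)) '' (X j) with hW
  -- closure function for p
  have hF1 : ∀ c : κ.ord.ToType, ∃ b, ∀ x ∈ p '' (Iic c ×ˢ Iic c), x < b := by
    intro c
    refine bdd_of_small hreg _ (lt_of_le_of_lt Cardinal.mk_image_le ?_)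
    rw [Cardinal.mk_setProd]
    exact Cardinal.mul_lt_of_lt hκ.le (card_Iic_lt hκ c) (card_Iic_lt hκ c)
  choose F1 hF1 using hF1
  -- closure function for p.symm
  have hF2 : ∀ c : κ.ord.ToType, ∃ b,
      ∀ x ∈ ((fun d => (p.symm d).1) '' Iic c) ∪ ((fun d => (p.symm d).2) '' Iic c),
        x < b := by
    intro c
    refine bdd_of_small hreg _ (lt_of_le_of_lt (Cardinal.mk_union_le _ _) ?_)
    exact Cardinal.add_lt_of_lt hκ.le
      (lt_of_le_of_lt Cardinal.mk_image_le (card_Iic_lt hκ c))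
      (lt_of_le_of_lt Cardinal.mk_image_le (card_Iic_lt hκ c))
  choose F2 hF2 using hF2
  -- bound on the range of e
  obtain ⟨δ, hδ⟩ := bdd_of_small hreg (range fun j : J => e j)
    (lt_of_le_of_lt Cardinal.mk_range_le hJ)
  -- difference points
  have hdiff : ∀ j : J, ∃ x, ¬(x ∈ X α ↔ x ∈ X j.1) := by
    intro j
    by_contra hcon
    push_neg at hcon
    have : X α = X j.1 := Set.ext (fun x => hcon x)
    have : α = j.1 := hXinj this
    exact hα (this ▸ j.2)
  choose d hd using hdiff
  obtain ⟨δ', hδ'⟩ := bdd_of_small hreg (range d)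
    (lt_of_le_of_lt Cardinal.mk_range_le hJ)
  -- the big club
  set B : Set κ.ord.ToType :=
    C ∩ ({a | ∀ c, c < a → F1 c < a} ∩ ({a | ∀ c, c < a → F2 c < a} ∩
      (Ioi t0 ∩ (Ioi δ ∩ Ioi δ')))) with hB
  have hBclub : IsClubIn B := by
    refine isClubIn_inter hκ hreg hC (isClubIn_inter hκ hreg (isClubIn_closure hκ hreg F1)
      (isClubIn_inter hκ hreg (isClubIn_closure hκ hreg F2)
        (isClubIn_inter hκ hreg (isClubIn_Ioi hκ hreg t0)
          (isClubIn_inter hκ hreg (isClubIn_Ioi hκ hreg δ) (isClubIn_Ioi hκ hreg δ')))))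
  obtain ⟨a, haS, haB⟩ := hD W B hBclub
  obtain ⟨haC, hF1a, hF2a, ht0a, hδa, hδ'a⟩ := haB
  have haS : W ∩ Iio a = D a := haS
  -- closure properties at a
  have hpa : ∀ x y : κ.ord.ToType, x < a → y < a → p (x, y) < a := by
    intro x y hx hy
    have h1 : p (x, y) ∈ p '' (Iic (max x y) ×ˢ Iic (max x y)) :=
      mem_image_of_mem _ (by constructor <;> simp)
    exact lt_trans (hF1 _ _ h1) (hF1a _ (max_lt hx hy))
  have hpsa : ∀ t : κ.ord.ToType, t < a → (p.symm t).1 < a ∧ (p.symm t).2 < a := by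
    intro t ht
    constructor
    · exact lt_trans (hF2 t _ (mem_union_left _ (mem_image_of_mem _ (le_refl t))))
        (hF2a _ ht)
    · exact lt_trans (hF2 t _ (mem_union_right _ (mem_image_of_mem _ (le_refl t))))
        (hF2a _ ht)
  -- key computation of sections
  have key : ∀ j : J, {b | p (e j, b) ∈ W ∩ Iio a} = X j.1 ∩ Iio a := by
    intro j
    ext b
    constructor
    · rintro ⟨hbW, hba⟩
      obtain ⟨j', hs⟩ := mem_iUnion.mp hbW
      obtain ⟨x, hx, hpx⟩ := hs
      have hpair : (e j', x) = (e j, b) := p.injective hpx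
      have hj' : j' = j := e.injective (congrArg Prod.fst hpair)
      have hxb : x = b := congrArg Prod.snd hpair
      refine ⟨by rw [← hj', ← hxb]; exact hx, ?_⟩
      exact (hpsa _ hba).2.trans_eq' (by rw [Equiv.symm_apply_apply])
    · rintro ⟨hbX, hba⟩
      refine ⟨mem_iUnion.mpr ⟨j, mem_image_of_mem _ hbX⟩, ?_⟩
      exact hpa _ _ (lt_trans (hδ _ (mem_range_self j)) hδa) hba
  refine ⟨a, haC, ?_, ?_⟩
  · intro j hj
    exact ⟨e ⟨j, hj⟩, by rw [← haS]; exact (key ⟨j, hj⟩).symm⟩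
  · rintro ⟨i, hi⟩
    rw [← haS] at hi
    have ht0 : t0 ∈ X α ∩ Iio a := ⟨hXt0 α, ht0a⟩
    have hpt0 : p (i, t0) ∈ W ∩ Iio a := by rw [hi] at ht0; exact ht0
    obtain ⟨j, hs⟩ := mem_iUnion.mp hpt0.1
    obtain ⟨x, hx, hpx⟩ := hs
    have hie : i = e j := (congrArg Prod.fst (p.injective hpx)).symm
    have : X α ∩ Iio a = X j.1 ∩ Iio a := by
      rw [hi, hie]; exact key j
    have hdja : d j < a := lt_trans (hδ' _ (mem_range_self j)) hδ'a
    refine hd j ?_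
    constructor
    · intro h
      exact (((this ▸ (⟨h, hdja⟩ : d j ∈ X α ∩ Iio a)) : d j ∈ X j.1 ∩ Iio a)).1
    · intro h
      exact ((this.symm ▸ (⟨h, hdja⟩ : d j ∈ X j.1 ∩ Iio a)) : d j ∈ X α ∩ Iio a).1

theorem stmt15_aux
    (hL : ∀ κ : Cardinal.{0}, ℵ₀ < κ → κ.IsRegular → DiamondOn κ) :
    ∀ κ : Cardinal.{0}, ℵ₀ < κ → κ.IsRegular →
      ∃ F : Set (Set κ.ord.ToType), IsCFilter κ F ∧
        (∀ C : Set κ.ord.ToType, IsClubIn C → C ∈ F) ∧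
        ¬ GalF κ (Order.succ κ) F := by
  classical
  intro κ hκ hreg
  obtain ⟨D, hD1, hD2⟩ := hL κ hκ hreg
  have mkT : #κ.ord.ToType = κ := by rw [Cardinal.mk_toType, Cardinal.card_ord]
  have hTne : Nonempty κ.ord.ToType :=
    Cardinal.mk_ne_zero_iff.mp (by rw [mkT]; exact hreg.pos.ne')
  obtain ⟨t0⟩ := hTne
  -- pairing function
  obtain ⟨p⟩ : Nonempty (κ.ord.ToType × κ.ord.ToType ≃ κ.ord.ToType) := by
    refine Cardinal.eq.mp ?_
    rw [Cardinal.mk_prod, mkT]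
    simp [Cardinal.mul_eq_self hκ.le]
  -- an injection of T into T avoiding t0
  obtain ⟨c0, hc0⟩ := bdd_of_small hreg {(p.symm t0).2}
    (by rw [Cardinal.mk_singleton]; exact lt_trans Cardinal.one_lt_aleph0 hκ)
  have hc0' : c0 ≠ (p.symm t0).2 := (hc0 _ rfl).ne'
  set ιf : κ.ord.ToType → κ.ord.ToType := fun x => p (x, c0) with hιf
  have hιft0 : ∀ x, ιf x ≠ t0 := by
    intro x hx
    apply hc0'
    have := congrArg p.symm hx
    rw [Equiv.symm_apply_apply] at this
    exact (congrArg Prod.snd this)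
  have hιfinj : Function.Injective ιf := fun x y h =>
    congrArg Prod.fst (p.injective h)
  -- the injective family X indexed by κ⁺
  have mkS : #(Order.succ κ).ord.ToType = Order.succ κ := by
    rw [Cardinal.mk_toType, Cardinal.card_ord]
  obtain ⟨g⟩ : Nonempty ((Order.succ κ).ord.ToType ↪ Set κ.ord.ToType) := by
    refine (Cardinal.le_def _ _).mp ?_
    rw [mkS, Cardinal.mk_set, mkT]
    exact Order.succ_le_of_lt (Cardinal.cantor κ)
  set X : (Order.succ κ).ord.ToType → Set κ.ord.ToType :=
    fun β => insert t0 (ιf '' g β) with hX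
  have hXt0 : ∀ β, t0 ∈ X β := fun β => mem_insert _ _
  have hXinj : Function.Injective X := by
    intro β β' h
    apply g.injective
    ext x
    have hmem : ∀ γ, x ∈ g γ ↔ ιf x ∈ X γ := by
      intro γ
      constructor
      · intro hx
        exact mem_insert_of_mem _ (mem_image_of_mem _ hx)
      · intro hx
        rcases hx with hx | hx
        · exact absurd hx (hιft0 x)
        · obtain ⟨y, hy, hyx⟩ := hx
          rwa [← hιfinj hyx]
    rw [hmem β, hmem β', h]
  -- the filter
  set F : Set (Set κ.ord.ToType) :=
    {Y | ∃ C, IsClubIn C ∧ ∃ Js : Set (Order.succ κ).ord.ToType,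
      #Js < κ ∧ C ∩ ⋂ j ∈ Js, AxFam p D (X j) ⊆ Y} with hF
  -- auxiliary: the generating sets are nonempty
  have hJuniv : ∀ Js : Set (Order.succ κ).ord.ToType, #Js < κ → ∃ α, α ∉ Js := by
    intro Js hJs
    rcases eq_or_ne Js univ with rfl | hne
    · exfalso
      rw [Cardinal.mk_univ, mkS] at hJs
      exact absurd (lt_trans (Order.lt_succ κ) hJs) (lt_irrefl κ)
    · exact Set.ne_univ_iff_exists_notMem _ |>.mp hne
  have keyN : ∀ C : Set κ.ord.ToType, IsClubIn C →
      ∀ Js : Set (Order.succ κ).ord.ToType, #Js < κ →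
      (C ∩ ⋂ j ∈ Js, AxFam p D (X j)).Nonempty := by
    intro C hC Js hJs
    obtain ⟨α, hα⟩ := hJuniv Js hJs
    obtain ⟨a, haC, hall, -⟩ :=
      main_lemma hκ hreg D hD2 p t0 X hXinj hXt0 Js hJs α hα C hC
    exact ⟨a, haC, mem_iInter₂.mpr hall⟩
  refine ⟨F, ⟨?_, ?_, ?_, ?_⟩, ?_, ?_⟩
  · -- univ ∈ F
    refine ⟨univ, isClubIn_univ hκ hreg, ∅, ?_, subset_univ _⟩
    rw [Cardinal.mk_emptyCollection]
    exact hreg.pos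
  · -- ∅ ∉ F
    rintro ⟨C, hC, Js, hJs, hsub⟩
    obtain ⟨a, ha⟩ := keyN C hC Js hJs
    exact (hsub ha).elim
  · -- upward closed
    rintro Y ⟨C, hC, Js, hJs, hsub⟩ Z hYZ
    exact ⟨C, hC, Js, hJs, hsub.trans hYZ⟩
  · -- κ-completeness
    intro ι' f hι' hf
    choose C hCclub Js hJs hsub using hf
    refine ⟨⋂ i, C i, isClubIn_iInter hκ hreg C hι' hCclub, ⋃ i, Js i, ?_, ?_⟩
    · exact lt_of_le_of_lt Cardinal.mk_iUnion_le_sum_mk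
        (Cardinal.sum_lt_of_isRegular hreg hι' hJs)
    · rintro x ⟨hx1, hx2⟩
      refine mem_iInter.mpr fun i => hsub i ⟨mem_iInter.mp hx1 i, ?_⟩
      exact mem_iInter₂.mpr fun j hj =>
        mem_iInter₂.mp hx2 j (mem_iUnion.mpr ⟨i, hj⟩)
  · -- contains all clubs
    intro C hC
    refine ⟨C, hC, ∅, ?_, fun x hx => hx.1⟩
    rw [Cardinal.mk_emptyCollection]
    exact hreg.pos
  · -- fails Galvin
    intro hG
    have hmemF : ∀ β, AxFam p D (X β) ∈ F := by
      intro β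
      refine ⟨univ, isClubIn_univ hκ hreg, {β}, ?_, ?_⟩
      · rw [Cardinal.mk_singleton]
        exact lt_trans Cardinal.one_lt_aleph0 hκ
      · intro x hx
        exact mem_iInter₂.mp hx.2 β rfl
    obtain ⟨I, hIcard, hImem⟩ := hG (fun β => AxFam p D (X β)) hmemF
    obtain ⟨C, hC, Js, hJs, hsub⟩ := hImem
    have hns : ¬ I ⊆ Js := by
      intro hIJ
      have h1 := Cardinal.mk_le_mk_of_subset hIJ
      rw [hIcard] at h1
      exact absurd (lt_of_le_of_lt h1 hJs) (lt_irrefl κ)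
    obtain ⟨α, hαI, hαJ⟩ := Set.not_subset.mp hns
    obtain ⟨a, haC, hall, hnot⟩ :=
      main_lemma hκ hreg D hD2 p t0 X hXinj hXt0 Js hJs α hαJ C hC
    exact hnot (mem_iInter₂.mp (hsub ⟨haC, mem_iInter₂.mpr hall⟩) α hαI)
/-- in `L`, every regular uncountable cardinal `κ` carries a
`κ`-complete filter extending the club filter which fails the Galvin property
`Gal(·, κ, κ⁺)`.  (`V = L` is used only through its consequence that `◊(κ)` holds
at every regular uncountable cardinal, which is how it is rendered here.) -/
theorem stmt15
    (hL : ∀ κ : Cardinal.{0}, ℵ₀ < κ → κ.IsRegular → DiamondOn κ) :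
    ∀ κ : Cardinal.{0}, ℵ₀ < κ → κ.IsRegular →
      ∃ F : Set (Set κ.ord.ToType), IsCFilter κ F ∧
        (∀ C : Set κ.ord.ToType, IsClubIn C → C ∈ F) ∧
        ¬ GalF κ (Order.succ κ) F := by
  exact stmt15_aux hL
end

section
/- Suppose U is a κ-complete ultrafilter over κ that is not a p-point, and let f : κ → κ represent the least ν = [f]_U that is ≥ κ with f almost one-to-one mod U chosen minimally. Then ν is a generator of j_U above κ: for every g : κ → κ and every ρ < ν, j_U(g)(ρ) < ν. -/
open Cardinal Set

universe u

/-- `W` is a `κ`-complete ultrafilter. -/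
def CComplete {β : Type u} (κ : Cardinal.{0}) (W : Ultrafilter β) : Prop :=
  ∀ (ι : Type) (f : ι → Set β), #ι < κ → (∀ i, f i ∈ W) → (⋂ i, f i) ∈ W

/-- `f` is almost one-to-one mod `W`. -/
def AlmostInj {β : Type u} [LinearOrder β] (W : Ultrafilter β) (f : β → β) : Prop :=
  ∃ X ∈ W, ∀ γ : β, ∃ b : β, ∀ x ∈ X, f x < γ → x ≤ b

/-- `W` is a p-point ultrafilter. -/
def IsPPoint {β : Type u} [LinearOrder β] (W : Ultrafilter β) : Prop :=
  ∀ f : β → β, (¬ ∃ c, {x | f x = c} ∈ W) → AlmostInj W f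

section Aux

variable {κ : Cardinal.{0}} {U : Ultrafilter κ.ord.ToType}

/-- Small sets are not in a κ-complete nonprincipal ultrafilter. -/
lemma small_not_mem
    (hUcc : CComplete κ U)
    (hUnp : ∀ x, U ≠ (pure x : Ultrafilter _))
    {S : Set κ.ord.ToType} (hS : #S < κ) : S ∉ U := by
  intro hSU
  have h1 : (⋂ s : S, ({(s : κ.ord.ToType)}ᶜ : Set κ.ord.ToType)) ∈ U := by
    refine hUcc S _ hS fun s => ?_
    rw [Ultrafilter.compl_mem_iff_notMem]
    intro hs
    rcases Ultrafilter.eq_pure_of_finite_mem (finite_singleton _) hs with ⟨x, hx, hfx⟩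
    rw [mem_singleton_iff] at hx
    exact hUnp x (hx ▸ hfx)
  have h2 := (U.toFilter.inter_mem hSU h1)
  rcases Filter.nonempty_of_mem h2 with ⟨x, hxS, hxI⟩
  rw [mem_iInter] at hxI
  exact hxI ⟨x, hxS⟩ rfl

lemma Iic_not_mem (hκ : ℵ₀ < κ) (hUcc : CComplete κ U)
    (hUnp : ∀ x, U ≠ (pure x : Ultrafilter _)) (b : κ.ord.ToType) :
    Iic b ∉ U := by
  apply small_not_mem hUcc hUnp
  have : (Iic b : Set κ.ord.ToType) = insert b (Iio b) := by
    ext x; simp [le_iff_lt_or_eq, or_comm]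
  rw [this]
  calc #(insert b (Iio b) : Set κ.ord.ToType) ≤ #(Iio b) + 1 := mk_insert_le
    _ < κ := by
      rcases lt_or_ge #(Iio b) ℵ₀ with h | h
      · exact lt_of_lt_of_le (add_lt_aleph0 h one_lt_aleph0) hκ.le
      · rw [add_one_eq h]; exact Cardinal.mk_Iio_ord_toType b

/-- Boundedness of small families: images of initial segments are bounded. -/
lemma image_bounded (hκ : ℵ₀ < κ) (hUcc : CComplete κ U)
    (hUnp : ∀ x, U ≠ (pure x : Ultrafilter _)) (s : κ.ord.ToType → κ.ord.ToType)
    (γ : κ.ord.ToType) : ∃ b, ∀ y < γ, s y ≤ b := by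
  have h1 : (⋂ y : Iio γ, {x | s y < x}) ∈ U := by
    refine hUcc (Iio γ) _ (Cardinal.mk_Iio_ord_toType γ) fun y => ?_
    have := Iic_not_mem hκ hUcc hUnp (s y)
    rw [← Ultrafilter.compl_mem_iff_notMem] at this
    convert this using 1
    ext x; simp
  rcases Filter.nonempty_of_mem h1 with ⟨x, hx⟩
  rw [mem_iInter] at hx
  exact ⟨x, fun y hy => (hx ⟨y, hy⟩).le⟩

lemma germ_lt_iff {a b : κ.ord.ToType → κ.ord.ToType} :
    (Filter.Germ.ofFun a : Filter.Germ (↑U) κ.ord.ToType) < .ofFun b ↔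
      ∀ᶠ x in ↑U, a x < b x := by
  constructor
  · intro hlt
    obtain ⟨hle, hne⟩ := lt_iff_le_not_ge.1 hlt
    rw [Filter.Germ.coe_le] at hne
    have : ∀ᶠ x in ↑U, ¬ b x ≤ a x := Ultrafilter.eventually_not.2 hne
    exact this.mono fun x hx => lt_of_not_ge hx
  · intro h
    refine lt_of_le_of_ne (Filter.Germ.coe_le.2 (h.mono fun x hx => hx.le)) fun he => ?_
    rw [Filter.Germ.coe_eq] at he
    rcases Filter.nonempty_of_mem (Filter.inter_mem h he) with ⟨x, h1, h2⟩
    exact absurd h2 h1.ne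

end Aux

/-- suppose `U` is a `κ`-complete ultrafilter over the measurable cardinal
`κ` which is not a p-point, and `f : κ → κ` is almost one-to-one mod `U` with
`ν := [f]_U ≥ κ` (its germ lies strictly above every constant germ), chosen minimally:
`[f]_U ≤ [h]_U` for every almost one-to-one `h` with `[h]_U ≥ κ`.  Then `ν` is a
generator of `j_U` above `κ`: for every `g : κ → κ` and every ordinal `ρ < ν` (i.e.
every germ `[h]_U < [f]_U`), `j_U(g)(ρ) < ν`, i.e. `[g ∘ h]_U < [f]_U`. -/
theorem stmt19 (κ : Cardinal.{0}) (hκ : ℵ₀ < κ)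
    (U : Ultrafilter κ.ord.ToType) (hUcc : CComplete κ U)
    (hUnp : ∀ x, U ≠ (pure x : Ultrafilter _))
    (hnotpp : ¬ IsPPoint U)
    (f : κ.ord.ToType → κ.ord.ToType)
    (hfalmost : AlmostInj U f)
    (hfabove : ∀ c : κ.ord.ToType,
      (Filter.Germ.ofFun (fun _ => c) : Filter.Germ (↑U) κ.ord.ToType) < .ofFun f)
    (hfmin : ∀ h : κ.ord.ToType → κ.ord.ToType, AlmostInj U h →
      (∀ c : κ.ord.ToType,
        (Filter.Germ.ofFun (fun _ => c) : Filter.Germ (↑U) κ.ord.ToType) < .ofFun h) →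
      (Filter.Germ.ofFun f : Filter.Germ (↑U) κ.ord.ToType) ≤ .ofFun h) :
    ∀ g h : κ.ord.ToType → κ.ord.ToType,
      (Filter.Germ.ofFun h : Filter.Germ (↑U) κ.ord.ToType) < .ofFun f →
      (Filter.Germ.ofFun (g ∘ h) : Filter.Germ (↑U) κ.ord.ToType) < .ofFun f := by
  intro g h hh
  haveI : NoMaxOrder κ.ord.ToType := Cardinal.noMaxOrder hκ.le
  rw [germ_lt_iff]
  by_contra hcon
  -- so X0 := {x | f x ≤ g (h x)} ∈ U
  have hX0 : {x | f x ≤ g (h x)} ∈ U := by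
    rcases (Ultrafilter.mem_or_compl_mem U {x | f x ≤ g (h x)}) with h1 | h1
    · exact h1
    · exfalso; apply hcon
      refine Filter.mem_of_superset h1 fun x hx => ?_
      simp only [mem_compl_iff, mem_setOf_eq] at hx
      exact lt_of_not_ge hx
  set X0 : Set κ.ord.ToType := {x | f x ≤ g (h x)} with hX0def
  -- define h' x = least y with y ≤ h x and f x ≤ g y, if exists
  classical
  set S : κ.ord.ToType → Set κ.ord.ToType := fun x => {y | y ≤ h x ∧ f x ≤ g y} with hSdef
  have hSne : ∀ x ∈ X0, (S x).Nonempty := fun x hx => ⟨h x, le_rfl, hx⟩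
  set h' : κ.ord.ToType → κ.ord.ToType := fun x =>
    if hx : (S x).Nonempty then (IsWellFounded.wf (r := (· < · : κ.ord.ToType → κ.ord.ToType → Prop))).min (S x) hx
    else h x with hh'def
  have hh'mem : ∀ x ∈ X0, h' x ∈ S x := by
    intro x hx
    simp only [hh'def, dif_pos (hSne x hx)]
    exact WellFounded.min_mem _ _ _
  have hh'le : ∀ x ∈ X0, h' x ≤ h x := fun x hx => (hh'mem x hx).1
  have hh'f : ∀ x ∈ X0, f x ≤ g (h' x) := fun x hx => (hh'mem x hx).2
  -- h' is almost one-to-one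
  rcases hfalmost with ⟨Xf, hXfU, hXf⟩
  have halmost : AlmostInj U h' := by
    refine ⟨Xf ∩ X0, Filter.inter_mem hXfU hX0, fun γ => ?_⟩
    rcases image_bounded hκ hUcc hUnp g γ with ⟨δ, hδ⟩
    rcases exists_gt δ with ⟨δ', hδ'⟩
    rcases hXf δ' with ⟨b, hb⟩
    refine ⟨b, fun x hx hlt => ?_⟩
    refine hb x hx.1 ?_
    calc f x ≤ g (h' x) := hh'f x hx.2
      _ ≤ δ := hδ _ hlt
      _ < δ' := hδ'
  -- h' is above all constants
  have habove : ∀ c : κ.ord.ToType,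
      (Filter.Germ.ofFun (fun _ => c) : Filter.Germ (↑U) κ.ord.ToType) < .ofFun h' := by
    intro c
    rw [germ_lt_iff]
    rcases exists_gt c with ⟨c', hc'⟩
    rcases image_bounded hκ hUcc hUnp g c' with ⟨δ, hδ⟩
    have hfδ : ∀ᶠ x in ↑U, δ < f x := germ_lt_iff.1 (hfabove δ)
    have : X0 ∈ (U : Filter _) := hX0
    filter_upwards [this, hfδ] with x hx hfx
    by_contra hle
    push_neg at hle
    have : f x ≤ δ := le_trans (hh'f x hx) (hδ _ (lt_of_le_of_lt hle hc'))
    exact absurd hfx (not_lt.2 this)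
  -- minimality gives a contradiction
  have hge := hfmin h' halmost habove
  have hlt : (Filter.Germ.ofFun h' : Filter.Germ (↑U) κ.ord.ToType) < .ofFun f := by
    rcases germ_lt_iff.1 hh with h1
    have : X0 ∈ (U : Filter _) := hX0
    rw [germ_lt_iff]
    filter_upwards [this, h1] with x hx h1x
    exact lt_of_le_of_lt (hh'le x hx) h1x
  exact absurd hge (not_le.2 hlt)
end
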